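/- Let N ≥ 4, let v_1,...,v_N be arbitrary real numbers, β_0 = 0, β_1,...,β_{N−1} real constants, f_n = v_n + v_{n+1}, and write the transition matrix T(λ) = V_N(λ + β_{N−1}) ⋯ V_1(λ) as [[A(λ), B(λ)], [C(λ), D(λ)]]. Then B(λ) equals ∏_{n=1}^{N−2} (1 + (λ + β_n) ∂²/∂f_n ∂f_{n+1}) applied to f_1 f_2 ⋯ f_{N−1} and evaluated at f_n = v_n + v_{n+1}; moreover there is a polynomial Ã(λ), given by ∏_{n=2}^{N−2} (1 + (λ + β_n) ∂²/∂f_n ∂f_{n+1}) applied to f_2 ⋯ f_{N−1} and evaluated at f_n = v_n + v_{n+1}, such that A(λ) = B(λ) v_1 + Ã(λ) λ. -/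

import Mathlib

open Polynomial in
/-- The matrix V_n(λ + b) with polynomial entries: rows (v_n, 1), (λ + b + v_n², v_n). -/
noncomputable def polyV (w b : ℝ) : Matrix (Fin 2) (Fin 2) (Polynomial ℝ) :=
  !![C w, 1; X + C b + C (w ^ 2), C w]

/-- Partial transition matrix with polynomial entries:
`polyT v β k = V_k(λ+β_{k-1}) ⋯ V_2(λ+β_1) V_1(λ+β_0)`. -/
noncomputable def polyT (v β : ℕ → ℝ) : ℕ → Matrix (Fin 2) (Fin 2) (Polynomial ℝ)
  | 0 => 1
  | k + 1 => polyV (v (k + 1)) (β k) * polyT v β k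

/-- The Veselov–Shabat operator 1 + (λ + β_n) ∂²/∂f_n ∂f_{n+1} on the polynomial ring
in the variables f_1, f_2, … over ℝ[λ]. -/
noncomputable def vsOp (β : ℕ → ℝ) (n : ℕ) (p : MvPolynomial ℕ (Polynomial ℝ)) :
    MvPolynomial ℕ (Polynomial ℝ) :=
  p + MvPolynomial.C (Polynomial.X + Polynomial.C (β n)) *
      MvPolynomial.pderiv n (MvPolynomial.pderiv (n + 1) p)

/-- F_m(λ) = ∏_{n=m}^{N−2} (1 + (λ + β_n) ∂²/∂f_n ∂f_{n+1}) (f_m f_{m+1} ⋯ f_{N−1});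
for m = N−1 this is just f_{N−1}. -/
noncomputable def vsF (β : ℕ → ℝ) (N m : ℕ) : MvPolynomial ℕ (Polynomial ℝ) :=
  (List.range' m (N - 1 - m)).foldr (vsOp β)
    (∏ n ∈ Finset.Icc m (N - 1), MvPolynomial.X n)

/-!
The first row `(A_n, B_n)` of `V_n ⋯ V_1` satisfies the three-term recurrence
`x_{n+2} = (v_{n+1} + v_{n+2}) x_{n+1} + (λ + β_n) x_n`. So does the evaluated polynomial
`F_m(n)` for `n ≥ m`: the innermost operator `1 + (λ + β_n) ∂²/∂f_n ∂f_{n+1}` turns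
`f_m ⋯ f_{n+1}` into `f_{n+1} · f_m ⋯ f_n + (λ + β_n) f_m ⋯ f_{n-1}`; the remaining operators
commute with multiplication by `f_{n+1}`, and on `f_m ⋯ f_{n-1}` the one indexed by `n - 1` is the
identity. Hence `B_n` and `A_n - v_1 B_n` agree with `F_1(n)` and `λ F_2(n)` once their two
initial values do.
-/

theorem eq_of_three_term_recurrence {R : Type*} [Semiring R] {a b x y : ℕ → R} {m : ℕ}
    (hx : ∀ n ≥ m, x (n + 2) = a n * x (n + 1) + b n * x n)
    (hy : ∀ n ≥ m, y (n + 2) = a n * y (n + 1) + b n * y n)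
    (h₀ : x m = y m) (h₁ : x (m + 1) = y (m + 1)) : ∀ n ≥ m, x n = y n := by
  suffices ∀ n ≥ m, x n = y n ∧ x (n + 1) = y (n + 1) from fun n hn => (this n hn).1
  intro n hn
  induction n, hn using Nat.le_induction with
  | base => exact ⟨h₀, h₁⟩
  | succ n hn ih => exact ⟨ih.2, by rw [hx n hn, hy n hn, ih.1, ih.2]⟩

theorem List.foldr_range'_succ {α : Type*} (f : ℕ → α → α) (x : α) (m k : ℕ) :
    (List.range' m (k + 1)).foldr f x = (List.range' m k).foldr f (f (m + k) x) := by
  rw [List.range'_concat, List.foldr_append, one_mul]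
  rfl

section VeselovShabat

open MvPolynomial

variable (β : ℕ → ℝ)

theorem vsOp_of_pderiv_eq_zero {n : ℕ} {p : MvPolynomial ℕ (Polynomial ℝ)}
    (h : pderiv (n + 1) p = 0) : vsOp β n p = p := by
  simp [vsOp, h]

theorem foldr_vsOp_add (l : List ℕ) (p q : MvPolynomial ℕ (Polynomial ℝ)) :
    l.foldr (vsOp β) (p + q) = l.foldr (vsOp β) p + l.foldr (vsOp β) q := by
  induction l with
  | nil => rfl
  | cons n l ih => simp only [List.foldr_cons, ih, vsOp, map_add]; ring

theorem foldr_vsOp_C_mul (l : List ℕ) (a : Polynomial ℝ)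
    (p : MvPolynomial ℕ (Polynomial ℝ)) :
    l.foldr (vsOp β) (C a * p) = C a * l.foldr (vsOp β) p := by
  induction l with
  | nil => rfl
  | cons n l ih => simp only [List.foldr_cons, ih, vsOp, pderiv_C_mul]; ring

theorem foldr_vsOp_X_mul {j : ℕ} {l : List ℕ} (h : ∀ n ∈ l, j ≠ n ∧ j ≠ n + 1)
    (p : MvPolynomial ℕ (Polynomial ℝ)) :
    l.foldr (vsOp β) (X j * p) = X j * l.foldr (vsOp β) p := by
  induction l with
  | nil => rfl
  | cons n l ih =>
    obtain ⟨hn, hn₁⟩ := h n List.mem_cons_self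
    simp only [List.foldr_cons, ih fun i hi => h i (List.mem_cons_of_mem n hi), vsOp,
      pderiv_mul, pderiv_X_of_ne hn, pderiv_X_of_ne hn₁, zero_mul, zero_add]
    ring

theorem pderiv_prod_Ico_X_of_le {m n j : ℕ} (h : n ≤ j) :
    pderiv j (∏ i ∈ Finset.Ico m n, X i : MvPolynomial ℕ (Polynomial ℝ)) = 0 := by
  induction n with
  | zero => simp
  | succ n ih =>
    rcases le_or_gt m n with hmn | hnm
    · rw [Finset.prod_Ico_succ_top hmn, pderiv_mul, ih (by omega), pderiv_X_of_ne (by omega)]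
      simp
    · simp [Finset.Ico_eq_empty_of_le (by omega : n + 1 ≤ m)]

theorem pderiv_prod_Ico_X_succ {m n : ℕ} (h : m ≤ n) :
    pderiv n (∏ i ∈ Finset.Ico m (n + 1), X i : MvPolynomial ℕ (Polynomial ℝ)) =
      ∏ i ∈ Finset.Ico m n, X i := by
  rw [Finset.prod_Ico_succ_top h, pderiv_mul, pderiv_prod_Ico_X_of_le le_rfl, pderiv_X_self]
  simp

theorem vsOp_prod_Ico_X {m n : ℕ} (h : m ≤ n) :
    vsOp β n (∏ i ∈ Finset.Ico m (n + 2), X i) =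
      X (n + 1) * ∏ i ∈ Finset.Ico m (n + 1), X i +
        C (Polynomial.X + Polynomial.C (β n)) * ∏ i ∈ Finset.Ico m n, X i := by
  rw [vsOp, pderiv_prod_Ico_X_succ (by omega), pderiv_prod_Ico_X_succ h,
    Finset.prod_Ico_succ_top (by omega), mul_comm]

-- `Icc m (n - 1)` in `vsF` uses truncated subtraction; it equals `Ico m n` only because `m ≥ 1`.
theorem vsF_eq_foldr_Ico {m : ℕ} (hm : 1 ≤ m) (n : ℕ) :
    vsF β n m = (List.range' m (n - 1 - m)).foldr (vsOp β) (∏ i ∈ Finset.Ico m n, X i) := by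
  have hIcc : Finset.Icc m (n - 1) = Finset.Ico m n := by
    ext
    simp only [Finset.mem_Icc, Finset.mem_Ico]
    omega
  rw [vsF, hIcc]

theorem vsF_self {m : ℕ} (hm : 1 ≤ m) : vsF β m m = 1 := by
  simp [vsF_eq_foldr_Ico β hm]

theorem vsF_succ_self {m : ℕ} (hm : 1 ≤ m) : vsF β (m + 1) m = X m := by
  simp [vsF_eq_foldr_Ico β hm]

theorem vsF_add_two {m n : ℕ} (hm : 1 ≤ m) (hmn : m ≤ n) :
    vsF β (n + 2) m =
      X (n + 1) * vsF β (n + 1) m + C (Polynomial.X + Polynomial.C (β n)) * vsF β n m := by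
  have hlast : (List.range' m (n - m)).foldr (vsOp β) (∏ i ∈ Finset.Ico m n, X i) =
      vsF β n m := by
    rw [vsF_eq_foldr_Ico β hm]
    obtain rfl | hlt := hmn.eq_or_lt
    · simp
    · obtain ⟨k, hk⟩ : ∃ k, n - m = k + 1 := ⟨n - m - 1, by omega⟩
      rw [hk, show n - 1 - m = k by omega, List.foldr_range'_succ,
        vsOp_of_pderiv_eq_zero β (pderiv_prod_Ico_X_of_le (by omega))]
  have hcommute : ∀ i ∈ List.range' m (n - m), n + 1 ≠ i ∧ n + 1 ≠ i + 1 := by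
    intro i hi
    have := List.mem_range'_1.mp hi
    omega
  rw [vsF_eq_foldr_Ico β hm, show n + 2 - 1 - m = n - m + 1 by omega, List.foldr_range'_succ,
    show m + (n - m) = n by omega, vsOp_prod_Ico_X β hmn, foldr_vsOp_add, foldr_vsOp_C_mul,
    foldr_vsOp_X_mul β hcommute, hlast, vsF_eq_foldr_Ico β hm (n + 1),
    show n + 1 - 1 - m = n - m by omega]

theorem eval_vsF_add_two (g : ℕ → Polynomial ℝ) {m n : ℕ} (hm : 1 ≤ m) (hmn : m ≤ n) :
    MvPolynomial.eval g (vsF β (n + 2) m) =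
      g (n + 1) * MvPolynomial.eval g (vsF β (n + 1) m) +
        (Polynomial.X + Polynomial.C (β n)) * MvPolynomial.eval g (vsF β n m) := by
  simp only [vsF_add_two β hm hmn, map_add, map_mul, MvPolynomial.eval_X, MvPolynomial.eval_C]

end VeselovShabat

section TransitionMatrix

open Polynomial

variable (v β : ℕ → ℝ)

theorem polyT_add_two_apply_zero (k : ℕ) (j : Fin 2) :
    polyT v β (k + 2) 0 j =
      C (v (k + 1) + v (k + 2)) * polyT v β (k + 1) 0 j + (X + C (β k)) * polyT v β k 0 j := by
  simp only [polyT, polyV, Matrix.mul_apply, Fin.sum_univ_two, Matrix.of_apply, Matrix.cons_val',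
    Matrix.cons_val_zero, Matrix.cons_val_one, Matrix.cons_val_fin_one, map_add, map_pow]
  ring

theorem polyT_zero_apply_zero : polyT v β 0 0 = ![1, 0] := by
  ext j
  fin_cases j <;> rfl

theorem polyT_one_apply_zero : polyT v β 1 0 = ![C (v 1), 1] := by
  ext j
  fin_cases j <;> simp [polyT, polyV]

theorem polyT_apply_zero_one_eq_eval_vsF :
    ∀ n ≥ 1,
      polyT v β n 0 1 = MvPolynomial.eval (fun n => C (v n + v (n + 1))) (vsF β n 1) := by
  refine eq_of_three_term_recurrence (fun n _ => polyT_add_two_apply_zero v β n 1)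
    (fun n hn => eval_vsF_add_two β _ le_rfl hn) ?_ ?_
  · simp [vsF_self, polyT_one_apply_zero]
  · simp [polyT_add_two_apply_zero v β 0 1, vsF_succ_self, polyT_one_apply_zero,
      polyT_zero_apply_zero]

theorem polyT_apply_zero_zero_eq_add_eval_vsF_mul_X (hβ0 : β 0 = 0) :
    ∀ n ≥ 2, polyT v β n 0 0 = polyT v β n 0 1 * C (v 1)
      + MvPolynomial.eval (fun n => C (v n + v (n + 1))) (vsF β n 2) * X := by
  refine eq_of_three_term_recurrence (fun n _ => polyT_add_two_apply_zero v β n 0)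
    (fun n hn => ?_) ?_ ?_
  · rw [polyT_add_two_apply_zero v β n 1, eval_vsF_add_two β _ (by norm_num) hn]
    ring
  · rw [polyT_add_two_apply_zero v β 0 0, polyT_add_two_apply_zero v β 0 1,
      vsF_self β (by norm_num)]
    simp [polyT_one_apply_zero, polyT_zero_apply_zero, hβ0]
  · rw [polyT_add_two_apply_zero v β 1 0, polyT_add_two_apply_zero v β 1 1,
      polyT_add_two_apply_zero v β 0 0, polyT_add_two_apply_zero v β 0 1,
      vsF_succ_self β (by norm_num)]
    simp only [zero_add, polyT_one_apply_zero, polyT_zero_apply_zero, Matrix.cons_val_zero,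
      Matrix.cons_val_one, Matrix.cons_val_fin_one, hβ0, map_add, map_zero, MvPolynomial.eval_X]
    ring

end TransitionMatrix

/-- B(λ) = ∏_{n=1}^{N−2}(1 + (λ+β_n)∂²/∂f_n∂f_{n+1})(f_1⋯f_{N−1}) evaluated
at f_n = v_n + v_{n+1}, and A(λ) = B(λ)v_1 + Ã(λ)λ with
Ã(λ) = ∏_{n=2}^{N−2}(1 + (λ+β_n)∂²/∂f_n∂f_{n+1})(f_2⋯f_{N−1}) evaluated at f_n = v_n + v_{n+1}. -/
theorem transition_matrix_B_and_Atilde (N : ℕ) (hN : 4 ≤ N) (v β : ℕ → ℝ) (hβ0 : β 0 = 0) :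
    polyT v β N 0 1
      = MvPolynomial.eval (fun n => Polynomial.C (v n + v (n + 1))) (vsF β N 1) ∧
    polyT v β N 0 0
      = polyT v β N 0 1 * Polynomial.C (v 1)
        + MvPolynomial.eval (fun n => Polynomial.C (v n + v (n + 1))) (vsF β N 2)
          * Polynomial.X :=
  ⟨polyT_apply_zero_one_eq_eval_vsF v β N (by omega),
    polyT_apply_zero_zero_eq_add_eval_vsF_mul_X v β hβ0 N (by omega)⟩
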